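/- arXiv:2211.03077 — 6 statements merged into one kernel-verified Lean document; each statement's English description precedes it below -/
import Mathlib

section
/- Let N ≥ 1 agents and T items with supplies s_t ≥ 0 and values v_{it} ≥ 0 be given. If x* is an allocation maximizing the Nash welfare (∏_i ∑_t x_{it} v_{it})^{1/N} subject to ∑_i x_{it} ≤ s_t and x_{it} ≥ 0, then every agent i receives utility u_i* = ∑_t x*_{it} v_{it} ≥ (1/N) ∑_t s_t v_{it}. -/
open Finset

/-- Proportionality of the Nash welfare maximizing allocation. -/
theorem nash_welfare_proportionality
    (N T : ℕ) (hN : 0 < N)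
    (s : Fin T → ℝ) (v : Fin N → Fin T → ℝ)
    (hs : ∀ t, 0 ≤ s t) (hv : ∀ i t, 0 ≤ v i t)
    (xstar : Fin N → Fin T → ℝ)
    (hx_nonneg : ∀ i t, 0 ≤ xstar i t)
    (hx_supply : ∀ t, ∑ i, xstar i t ≤ s t)
    (hu_pos : ∀ i, 0 < ∑ t, xstar i t * v i t)
    (hopt : ∀ x : Fin N → Fin T → ℝ,
      (∀ i t, 0 ≤ x i t) → (∀ t, ∑ i, x i t ≤ s t) →
      (∏ i, ∑ t, x i t * v i t) ^ ((1 : ℝ) / N) ≤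
        (∏ i, ∑ t, xstar i t * v i t) ^ ((1 : ℝ) / N)) :
    ∀ i, (∑ t, xstar i t * v i t) ≥ (1 / N) * ∑ t, s t * v i t := by
  intro i
  set u : Fin N → ℝ := fun j => ∑ t, xstar j t * v j t with hu
  set S : ℝ := ∑ t, s t * v i t with hS
  have hS0 : 0 ≤ S := Finset.sum_nonneg fun t _ => mul_nonneg (hs t) (hv i t)
  have hQpos : 0 < ∏ j ∈ Finset.univ.erase i, u j :=
    Finset.prod_pos fun j _ => hu_pos j
  have hNR : (0:ℝ) < N := by exact_mod_cast hN
  have ha : 0 < u i := hu_pos i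
  -- key inequality from optimality
  have key : ∀ ε : ℝ, 0 ≤ ε → ε ≤ 1 →
      (1-ε)^(N-1) * ((1-ε) * u i + ε * S) ≤ u i := by
    intro ε hε0 hε1
    set x : Fin N → Fin T → ℝ :=
      fun j t => (1-ε) * xstar j t + (if j = i then ε * s t else 0) with hxdef
    have hxn : ∀ j t, 0 ≤ x j t := by
      intro j t
      have h1 : 0 ≤ (1-ε) * xstar j t := mul_nonneg (by linarith) (hx_nonneg j t)
      have h2 : 0 ≤ (if j = i then ε * s t else 0) := by
        split
        · exact mul_nonneg hε0 (hs t)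
        · exact le_refl 0
      exact add_nonneg h1 h2
    have hxs : ∀ t, ∑ j, x j t ≤ s t := by
      intro t
      have : ∑ j, x j t = (1-ε) * (∑ j, xstar j t) + ε * s t := by
        simp [hxdef, Finset.sum_add_distrib, Finset.mul_sum,
          Finset.sum_ite_eq' Finset.univ i]
      rw [this]
      nlinarith [hx_supply t, hs t]
    have hutil : ∀ j, (∑ t, x j t * v j t)
        = (1-ε) * u j + (if j = i then ε * S else 0) := by
      intro j
      by_cases h : j = i
      · subst h
        rw [if_pos rfl]
        have hterm : ∀ t ∈ Finset.univ, x j t * v j t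
            = (1-ε) * (xstar j t * v j t) + ε * (s t * v j t) := by
          intro t _
          show ((1-ε) * xstar j t + (if j = j then ε * s t else 0)) * v j t = _
          rw [if_pos rfl]; ring
        rw [Finset.sum_congr rfl hterm, Finset.sum_add_distrib,
          ← Finset.mul_sum, ← Finset.mul_sum]
      · rw [if_neg h, add_zero]
        have hterm : ∀ t ∈ Finset.univ, x j t * v j t
            = (1-ε) * (xstar j t * v j t) := by
          intro t _
          show ((1-ε) * xstar j t + (if j = i then ε * s t else 0)) * v j t = _
          rw [if_neg h]; ring
        rw [Finset.sum_congr rfl hterm, ← Finset.mul_sum]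
    have hprod : (∏ j, ∑ t, x j t * v j t)
        = ((1-ε) * u i + ε * S) * ((1-ε)^(N-1) * ∏ j ∈ Finset.univ.erase i, u j) := by
      have h1 : (∏ j, ∑ t, x j t * v j t)
          = ∏ j, ((1-ε) * u j + (if j = i then ε * S else 0)) := by
        exact Finset.prod_congr rfl fun j _ => hutil j
      rw [h1, ← Finset.mul_prod_erase Finset.univ _ (Finset.mem_univ i)]
      have h2 : ∏ j ∈ Finset.univ.erase i, ((1-ε) * u j + (if j = i then ε * S else 0))
          = ∏ j ∈ Finset.univ.erase i, (1-ε) * u j := by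
        refine Finset.prod_congr rfl fun j hj => ?_
        rw [if_neg (Finset.ne_of_mem_erase hj), add_zero]
      rw [h2, Finset.prod_mul_distrib, Finset.prod_const,
        Finset.card_erase_of_mem (Finset.mem_univ i)]
      simp [if_pos rfl]
    have hprodstar : (∏ j, u j) = u i * ∏ j ∈ Finset.univ.erase i, u j :=
      (Finset.mul_prod_erase Finset.univ _ (Finset.mem_univ i)).symm
    have hP'le : (∏ j, ∑ t, x j t * v j t) ≤ ∏ j, u j := by
      by_contra hlt
      push_neg at hlt
      have hPnn : 0 ≤ ∏ j, u j := le_of_lt (Finset.prod_pos fun j _ => hu_pos j)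
      have := Real.rpow_lt_rpow hPnn hlt (by positivity : (0:ℝ) < 1/N)
      exact absurd (hopt x hxn hxs) (not_le.mpr this)
    rw [hprod, hprodstar, ← mul_assoc] at hP'le
    have h2 := le_of_mul_le_mul_right hP'le hQpos
    rw [mul_comm]
    exact h2
  -- now the algebra
  show u i ≥ 1 / N * S
  by_contra hcon
  push_neg at hcon
  rw [one_div_mul_eq_div, lt_div_iff₀ hNR] at hcon
  set a := u i
  set m : ℝ := (N:ℝ) - 1 with hm
  set D : ℝ := S - a with hD
  set δ : ℝ := S - a * N with hδdef
  have hδ : 0 < δ := by simpa [hδdef] using sub_pos.mpr hcon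
  have hm0 : 0 ≤ m := by
    have : (1:ℝ) ≤ N := by exact_mod_cast hN
    simp [hm]; linarith
  have hD0 : 0 ≤ D := by nlinarith
  have hden : 0 < 2*m*D + δ := by nlinarith
  set ε : ℝ := δ / (2*m*D + δ) with hε
  have hε0 : 0 < ε := div_pos hδ hden
  have hε1 : ε ≤ 1 := by
    rw [hε, div_le_one hden]; nlinarith
  have hεeq : ε * (2*m*D + δ) = δ := div_mul_cancel₀ δ (ne_of_gt hden)
  have hkey := key ε (le_of_lt hε0) hε1
  -- Bernoulli
  have hbern : 1 - m * ε ≤ (1-ε)^(N-1) := by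
    have h := one_add_mul_le_pow (a := -ε) (by linarith) (N-1)
    have hcast : ((N-1 : ℕ) : ℝ) = m := by
      rw [hm, Nat.cast_sub hN]; simp
    calc 1 - m * ε = 1 + ((N-1:ℕ):ℝ) * (-ε) := by rw [hcast]; ring
      _ ≤ (1 + -ε)^(N-1) := h
      _ = (1-ε)^(N-1) := by ring_nf
  have hinner : 0 ≤ (1-ε) * a + ε * S :=
    add_nonneg (mul_nonneg (by linarith) (le_of_lt ha)) (mul_nonneg (le_of_lt hε0) hS0)
  have hfin : (1 - m * ε) * ((1-ε) * a + ε * S) ≤ a :=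
    le_trans (mul_le_mul_of_nonneg_right hbern hinner) hkey
  -- derive contradiction
  have expand : (1 - m*ε) * ((1-ε) * a + ε * S) = a + ε*δ - m*ε^2*D := by
    rw [hm, hD, hδdef]; ring
  have h1 : ε*δ ≤ m*ε^2*D := by linarith [hfin, expand]
  have h3 : ε * (m*ε*D*2) = ε * (δ - ε*δ) := by
    rw [show m*ε*D*2 = δ - ε*δ from by linarith [hεeq]]
  nlinarith [h1, h3, mul_pos hε0 hδ, mul_nonneg (mul_nonneg hε0.le hε0.le) hδ.le]
end

section
/- Let x* be a Nash welfare maximizing allocation whose utility vector u* satisfies u*_i ≤ μ · u*_j for all agents i, j (μ-impartiality). Then for any agent i and item t, if x*_{it} > 0, we have v_{it} ≥ (1/μ) · max_{1≤j≤N} v_{jt}. -/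
open Finset

/-- If the Nash welfare maximizer is μ-impartial, any agent receiving a positive
amount of an item has value at least a 1/μ fraction of the maximum value. -/
theorem impartial_maximum_value
    (N T : ℕ) (hN : 0 < N)
    (s : Fin T → ℝ) (v : Fin N → Fin T → ℝ)
    (hs : ∀ t, 0 ≤ s t) (hv : ∀ i t, 0 ≤ v i t)
    (μ : ℝ) (hμ : 1 ≤ μ)
    (xstar : Fin N → Fin T → ℝ)
    (hx_nonneg : ∀ i t, 0 ≤ xstar i t)
    (hx_supply : ∀ t, ∑ i, xstar i t ≤ s t)
    (hu_pos : ∀ i, 0 < ∑ t, xstar i t * v i t)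
    (hopt : ∀ x : Fin N → Fin T → ℝ,
      (∀ i t, 0 ≤ x i t) → (∀ t, ∑ i, x i t ≤ s t) →
      (∏ i, ∑ t, x i t * v i t) ^ ((1 : ℝ) / N) ≤
        (∏ i, ∑ t, xstar i t * v i t) ^ ((1 : ℝ) / N))
    (himp : ∀ i j, (∑ t, xstar i t * v i t) ≤ μ * ∑ t, xstar j t * v j t) :
    ∀ i t, 0 < xstar i t →
      v i t ≥ (1 / μ) * (Finset.univ.sup' (Finset.univ_nonempty_iff.mpr (Fin.pos_iff_nonempty.mp hN)) fun j => v j t) := by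
  intro i t hxit
  by_contra hcon
  push_neg at hcon
  have hμ0 : (0:ℝ) < μ := lt_of_lt_of_le one_pos hμ
  -- the max is attained at some j
  obtain ⟨j, -, hj⟩ := Finset.exists_mem_eq_sup' (Finset.univ_nonempty_iff.mpr (Fin.pos_iff_nonempty.mp hN)) (fun j => v j t)
  rw [hj] at hcon
  -- basic facts
  have hvj0 : 0 < v j t := by
    by_contra h
    push_neg at h
    have := hv j t
    have hvj : v j t = 0 := le_antisymm h this
    rw [hvj] at hcon
    simp at hcon
    exact absurd hcon (not_lt.mpr (hv i t))
  have hvij : v i t < v j t := by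
    calc v i t < (1/μ) * v j t := hcon
    _ ≤ 1 * v j t := by
        apply mul_le_mul_of_nonneg_right _ (le_of_lt hvj0)
        rw [div_le_one hμ0]; exact hμ
    _ = v j t := one_mul _
  have hij : j ≠ i := fun h => by rw [h] at hvij; exact lt_irrefl _ hvij
  set ui := ∑ t', xstar i t' * v i t' with hui_def
  set uj := ∑ t', xstar j t' * v j t' with huj_def
  have hui : 0 < ui := hu_pos i
  have huj : 0 < uj := hu_pos j
  have hD : 0 < ui * v j t - uj * v i t := by
    have h1 : uj * v i t ≤ μ * ui * v i t :=
      mul_le_mul_of_nonneg_right (himp j i) (hv i t)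
    have h2 : μ * ui * v i t < μ * ui * ((1/μ) * v j t) :=
      mul_lt_mul_of_pos_left hcon (mul_pos hμ0 hui)
    have h3 : μ * ui * ((1/μ) * v j t) = ui * v j t := by
      field_simp
    nlinarith
  set D := ui * v j t - uj * v i t with hD_def
  set ε := min (xstar i t) (D / (v i t * v j t + 1)) with hε_def
  have hden : (0:ℝ) < v i t * v j t + 1 := by
    nlinarith [mul_nonneg (hv i t) (le_of_lt hvj0)]
  have hε0 : 0 < ε := lt_min hxit (div_pos hD hden)
  have hε1 : ε ≤ xstar i t := min_le_left _ _
  have hε2 : ε ≤ D / (v i t * v j t + 1) := min_le_right _ _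
  -- the perturbed allocation
  set x : Fin N → Fin T → ℝ := fun k t' =>
    if k = i ∧ t' = t then xstar i t - ε
    else if k = j ∧ t' = t then xstar j t + ε
    else xstar k t' with hx_def
  have hxnn : ∀ k t', 0 ≤ x k t' := by
    intro k t'
    simp only [hx_def]
    split_ifs with h1 h2
    · linarith
    · have := hx_nonneg j t; linarith
    · exact hx_nonneg k t'
  have hxsup : ∀ t', ∑ k, x k t' ≤ s t' := by
    intro t'
    have : ∑ k, x k t' = ∑ k, xstar k t' := by
      by_cases ht' : t' = t
      · subst ht'
        have hpt : ∀ k, x k t' = xstar k t' +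
            ((if k = i then -ε else 0) + (if k = j then ε else 0)) := by
          intro k
          simp only [hx_def]
          by_cases h1 : k = i
          · subst h1; simp [Ne.symm hij]; ring
          · by_cases h2 : k = j
            · subst h2; simp [h1]
            · simp [h1, h2]
        rw [Finset.sum_congr rfl (fun k _ => hpt k)]
        rw [Finset.sum_add_distrib, Finset.sum_add_distrib]
        simp
      · apply Finset.sum_congr rfl
        intro k _
        simp [hx_def, ht']
    rw [this]; exact hx_supply t'
  -- utilities
  have hux : ∀ k, k ≠ i → k ≠ j → (∑ t', x k t' * v k t') = ∑ t', xstar k t' * v k t' := by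
    intro k hki hkj
    apply Finset.sum_congr rfl
    intro t' _
    simp [hx_def, hki, hkj]
  have huxi : (∑ t', x i t' * v i t') = ui - ε * v i t := by
    have hpt : ∀ t', x i t' * v i t' = xstar i t' * v i t' +
        (if t' = t then -(ε * v i t) else 0) := by
      intro t'
      simp only [hx_def]
      by_cases h : t' = t
      · subst h; simp; ring
      · simp [h]
    rw [Finset.sum_congr rfl (fun t' _ => hpt t'), Finset.sum_add_distrib]
    simp [hui_def]
    ring
  have huxj : (∑ t', x j t' * v j t') = uj + ε * v j t := by
    have hpt : ∀ t', x j t' * v j t' = xstar j t' * v j t' +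
        (if t' = t then ε * v j t else 0) := by
      intro t'
      simp only [hx_def]
      by_cases h : t' = t
      · subst h; simp [hij]; ring
      · simp [h]
    rw [Finset.sum_congr rfl (fun t' _ => hpt t'), Finset.sum_add_distrib]
    simp [huj_def]
  -- product comparison
  have hprod : (∏ k, ∑ t', xstar k t' * v k t') < ∏ k, ∑ t', x k t' * v k t' := by
    have hiu : i ∈ (Finset.univ : Finset (Fin N)) := Finset.mem_univ i
    have hju : j ∈ (Finset.univ : Finset (Fin N)).erase i :=
      Finset.mem_erase.mpr ⟨hij, Finset.mem_univ j⟩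
    have hrest : ∏ k ∈ ((Finset.univ : Finset (Fin N)).erase i).erase j,
        (∑ t', x k t' * v k t') = ∏ k ∈ ((Finset.univ : Finset (Fin N)).erase i).erase j,
        (∑ t', xstar k t' * v k t') := by
      apply Finset.prod_congr rfl
      intro k hk
      have hk1 := (Finset.mem_erase.mp hk).1
      have hk2 := (Finset.mem_erase.mp (Finset.mem_erase.mp hk).2).1
      exact hux k hk2 hk1
    have hCpos : 0 < ∏ k ∈ ((Finset.univ : Finset (Fin N)).erase i).erase j,
        (∑ t', xstar k t' * v k t') :=
      Finset.prod_pos (fun k _ => hu_pos k)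
    rw [← Finset.mul_prod_erase _ (fun k => ∑ t', x k t' * v k t') hiu,
        ← Finset.mul_prod_erase _ (fun k => ∑ t', x k t' * v k t') hju,
        ← Finset.mul_prod_erase _ (fun k => ∑ t', xstar k t' * v k t') hiu,
        ← Finset.mul_prod_erase _ (fun k => ∑ t', xstar k t' * v k t') hju]
    rw [hrest, huxi, huxj]
    have hkey : ui * uj < (ui - ε * v i t) * (uj + ε * v j t) := by
      have hεvv : ε * (v i t * v j t) < D := by
        calc ε * (v i t * v j t) ≤ (D / (v i t * v j t + 1)) * (v i t * v j t) := by
              apply mul_le_mul_of_nonneg_right hε2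
              exact mul_nonneg (hv i t) (hv j t)
        _ < D := by
              rw [div_mul_eq_mul_div, div_lt_iff₀ hden]
              nlinarith [hv i t, hvj0]
      nlinarith
    have := mul_lt_mul_of_pos_right hkey hCpos
    linarith [this]
  -- contradiction with optimality
  have hz : (0:ℝ) < 1 / N := by positivity
  have hP0 : (0:ℝ) ≤ ∏ k, ∑ t', xstar k t' * v k t' :=
    le_of_lt (Finset.prod_pos (fun k _ => hu_pos k))
  have h1 := Real.rpow_lt_rpow hP0 hprod hz
  have h2 := hopt x hxnn hxsup
  linarith
end

section
/- Let u'_i > 0, v_i ≥ 0 for i = 1..N and s > 0. Let z = (z_i) maximize ∑_i log(u'_i + v_i z_i) subject to z_i ≥ 0 and ∑_i z_i ≤ s. Then ∑_i [log(u'_i + v_i z_i) − log u'_i] ≥ s · max_i v_i/(u'_i + v_i z_i). -/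
open Finset Real

/-! The first-order optimality condition at `z`, tested against the allocation giving the whole
supply `s` to an agent `j` of maximal marginal rate `r j = v j / (u' j + v j * z j)`, yields
`s * r j ≤ ∑ i, r i * z i`. Concavity of `log` bounds each `r i * z i` by the log gain of agent
`i`. -/

lemma div_add_le_log_add_sub_log {a b : ℝ} (ha : 0 < a) (hb : 0 ≤ b) :
    b / (a + b) ≤ log (a + b) - log a := by
  have hab : 0 < a + b := by linarith
  calc b / (a + b) = 1 - ((a + b) / a)⁻¹ := by field_simp; ring
    _ ≤ log ((a + b) / a) := one_sub_inv_le_log_of_pos (by positivity)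
    _ = log (a + b) - log a := log_div hab.ne' ha.ne'

theorem IsMaxOn.hasFDerivWithinAt_sub_nonpos {E : Type*} [NormedAddCommGroup E]
    [NormedSpace ℝ E] {f : E → ℝ} {f' : StrongDual ℝ E} {S : Set E} {z w : E}
    (hS : Convex ℝ S) (hmax : IsMaxOn f S z) (hf : HasFDerivWithinAt f f' S z)
    (hz : z ∈ S) (hw : w ∈ S) : f' (w - z) ≤ 0 :=
  hmax.localize.hasFDerivWithinAt_nonpos hf
    (sub_mem_posTangentConeAt_of_segment_subset (hS.segment_subset hz hw))

section NashWelfare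

variable {ι : Type*} [Fintype ι]

variable (ι) in
def allocations (s : ℝ) : Set (ι → ℝ) :=
  {w | (∀ i, 0 ≤ w i) ∧ ∑ i, w i ≤ s}

lemma convex_allocations (s : ℝ) : Convex ℝ (allocations ι s) := by
  rintro x ⟨hx₀, hxs⟩ y ⟨hy₀, hys⟩ a b ha hb hab
  refine ⟨fun i => ?_, ?_⟩
  · simp only [Pi.add_apply, Pi.smul_apply, smul_eq_mul]
    have := hx₀ i; have := hy₀ i; positivity
  · simp only [Pi.add_apply, Pi.smul_apply, smul_eq_mul, sum_add_distrib, ← mul_sum]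
    calc a * ∑ i, x i + b * ∑ i, y i ≤ a * s + b * s := by gcongr
      _ = s := by rw [← add_mul, hab, one_mul]

noncomputable def logNashWelfare (u v w : ι → ℝ) : ℝ := ∑ i, log (u i + v i * w i)

lemma hasFDerivAt_logNashWelfare {u v z : ι → ℝ} (hpos : ∀ i, 0 < u i + v i * z i) :
    HasFDerivAt (logNashWelfare u v)
      (∑ i, (u i + v i * z i)⁻¹ • v i • (ContinuousLinearMap.proj i : (ι → ℝ) →L[ℝ] ℝ)) z :=
  HasFDerivAt.fun_sum fun i _ =>
    (((hasFDerivAt_apply i z).const_mul (v i)).const_add (u i)).log (hpos i).ne'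

theorem IsMaxOn.logNashWelfare_sum_div_mul_sub_nonpos {u v z w : ι → ℝ} {s : ℝ}
    (hpos : ∀ i, 0 < u i + v i * z i)
    (hmax : IsMaxOn (logNashWelfare u v) (allocations ι s) z)
    (hz : z ∈ allocations ι s) (hw : w ∈ allocations ι s) :
    ∑ i, v i / (u i + v i * z i) * (w i - z i) ≤ 0 := by
  have := hmax.hasFDerivWithinAt_sub_nonpos (convex_allocations s)
    (hasFDerivAt_logNashWelfare hpos).hasFDerivWithinAt hz hw
  simpa [div_eq_inv_mul, mul_assoc] using this

end NashWelfare

theorem greedy_predicted_utility_increase_general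
    (N : ℕ) (hN : 0 < N)
    (u' : Fin N → ℝ) (v : Fin N → ℝ) (s : ℝ)
    (hu' : ∀ i, 0 < u' i) (hv : ∀ i, 0 ≤ v i)
    (z : Fin N → ℝ)
    (hz_nonneg : ∀ i, 0 ≤ z i)
    (hz_supply : ∑ i, z i ≤ s)
    (hopt : ∀ w : Fin N → ℝ, (∀ i, 0 ≤ w i) → (∑ i, w i ≤ s) →
      (∑ i, Real.log (u' i + v i * w i)) ≤ ∑ i, Real.log (u' i + v i * z i)) :
    (∑ i, (Real.log (u' i + v i * z i) - Real.log (u' i))) ≥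
      s * (Finset.univ.sup' (Finset.univ_nonempty_iff.mpr (Fin.pos_iff_nonempty.mp hN))
        fun i => v i / (u' i + v i * z i)) := by
  set r : Fin N → ℝ := fun i => v i / (u' i + v i * z i)
  obtain ⟨j, -, hj⟩ := exists_mem_eq_sup' (univ_nonempty_iff.mpr (Fin.pos_iff_nonempty.mp hN)) r
  have hvz : ∀ i, 0 ≤ v i * z i := fun i => mul_nonneg (hv i) (hz_nonneg i)
  have hpos : ∀ i, 0 < u' i + v i * z i := fun i => add_pos_of_pos_of_nonneg (hu' i) (hvz i)
  have hs : 0 ≤ s := (sum_nonneg fun i _ => hz_nonneg i).trans hz_supply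
  have hsingle : Pi.single j s ∈ allocations (Fin N) s :=
    ⟨fun i => by by_cases h : i = j <;> simp [h, hs], by simp⟩
  have hfoc := IsMaxOn.logNashWelfare_sum_div_mul_sub_nonpos hpos (fun w hw => hopt w hw.1 hw.2)
    ⟨hz_nonneg, hz_supply⟩ hsingle
  rw [hj, ge_iff_le]
  calc s * r j = ∑ i, r i * (Pi.single j s : Fin N → ℝ) i := by simp [Pi.single_apply, mul_comm]
    _ ≤ ∑ i, r i * z i := by simpa [mul_sub] using hfoc
    _ ≤ ∑ i, (log (u' i + v i * z i) - log (u' i)) := sum_le_sum fun i _ => by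
      simpa only [r, div_mul_eq_mul_div] using div_add_le_log_add_sub_log (hu' i) (hvz i)

/-- The greedy single-item step: the gain of the log Nash welfare objective is
at least the supply times the maximum marginal rate. -/
theorem greedy_predicted_utility_increase
    (N : ℕ) (hN : 0 < N)
    (u' : Fin N → ℝ) (v : Fin N → ℝ) (s : ℝ)
    (hu' : ∀ i, 0 < u' i) (hv : ∀ i, 0 ≤ v i) (hs : 0 < s)
    (hvpos : ∃ i, 0 < v i)
    (z : Fin N → ℝ)
    (hz_nonneg : ∀ i, 0 ≤ z i)
    (hz_supply : ∑ i, z i ≤ s)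
    (hopt : ∀ w : Fin N → ℝ, (∀ i, 0 ≤ w i) → (∑ i, w i ≤ s) →
      (∑ i, Real.log (u' i + v i * w i)) ≤ ∑ i, Real.log (u' i + v i * z i)) :
    (∑ i, (Real.log (u' i + v i * z i) - Real.log (u' i))) ≥
      s * (Finset.univ.sup' (Finset.univ_nonempty_iff.mpr (Fin.pos_iff_nonempty.mp hN))
        fun i => v i / (u' i + v i * z i)) :=
  greedy_predicted_utility_increase_general N hN u' v s hu' hv z hz_nonneg hz_supply hopt
end

section
/- Let u_1 ≤ u_2 ≤ ... ≤ u_N and ũ_1, ..., ũ_N be nonnegative reals such that for every i, ∑_{j=1}^i ũ_j ≤ ∑_{j=1}^N min{u_i, u_j}. Then ∑_{i=1}^N log u_i ≥ ∑_{i=1}^N log( ∑_{j=1}^i ũ_j/(N+1−j) ), assuming all quantities inside logarithms are positive. -/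
/-! Let `t` be the benchmark for which every constraint is tight; its tight utilities are
exactly `u`, and the prefix sums of `t` are `∑_j min (u_i, u_j)`. The map
`x ↦ ∑_i log (∑_{k ≤ i} x_k / (N - k))` is concave with gradient at `t` equal to
`c_k = mean of 1 / u_i over i ≥ k`, which is nonnegative and nonincreasing because `u` is
sorted. Hence the gap to `∑ log u` is at most `∑_k c_k (x_k - t_k)`, and Abel summation makes
this nonpositive, since the constraints say exactly that the prefix sums of `x - t` are
nonpositive. -/

open Finset

noncomputable section

/-- The paper's `∑_{j ≤ i} ũ_j / (N + 1 - j)`, indexed from `0`. -/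
def tightUtility (n : ℕ) (x : ℕ → ℝ) (i : ℕ) : ℝ :=
  ∑ k ∈ range (i + 1), x k / ((n : ℝ) - k)

/-- The benchmark for which all prefix constraints against `a` are tight, so that
`tightUtility n (tightBenchmark n a) = a` on `[0, n)`. -/
def tightBenchmark (n : ℕ) (a : ℕ → ℝ) : ℕ → ℝ
  | 0 => n * a 0
  | k + 1 => ((n : ℝ) - (k + 1)) * (a (k + 1) - a k)

def suffixMean (n : ℕ) (w : ℕ → ℝ) (k : ℕ) : ℝ :=
  (∑ i ∈ Ico k n, w i) / ((n : ℝ) - k)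

end

lemma tightUtility_sub (n : ℕ) (x y : ℕ → ℝ) (i : ℕ) :
    tightUtility n (x - y) i = tightUtility n x i - tightUtility n y i := by
  simp only [tightUtility, ← sum_sub_distrib, Pi.sub_apply, sub_div]

lemma tightUtility_tightBenchmark {n : ℕ} (a : ℕ → ℝ) {i : ℕ} (hi : i < n) :
    tightUtility n (tightBenchmark n a) i = a i := by
  induction i with
  | zero =>
    have : (n : ℝ) ≠ 0 := by positivity
    simp [tightUtility, tightBenchmark, this]
  | succ i ih =>
    have : (n : ℝ) - (i + 1) ≠ 0 := by
      rw [sub_ne_zero]; exact_mod_cast hi.ne'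
    rw [tightUtility, sum_range_succ, ← tightUtility, ih (by omega)]
    simp [tightBenchmark, this]

lemma sum_range_tightBenchmark (n : ℕ) (a : ℕ → ℝ) (i : ℕ) :
    ∑ k ∈ range (i + 1), tightBenchmark n a k =
      ∑ k ∈ range (i + 1), a k + ((n : ℝ) - (i + 1)) * a i := by
  induction i with
  | zero =>
    simp only [zero_add, sum_range_one, tightBenchmark, Nat.cast_zero]
    ring
  | succ i ih =>
    rw [sum_range_succ, ih, sum_range_succ _ (i + 1)]
    simp only [tightBenchmark]
    push_cast
    ring

lemma sum_range_min_of_monotoneOn {n : ℕ} {a : ℕ → ℝ} (ha : MonotoneOn a (Set.Iio n))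
    {i : ℕ} (hi : i < n) :
    ∑ k ∈ range n, min (a i) (a k) =
      ∑ k ∈ range (i + 1), a k + ((n : ℝ) - (i + 1)) * a i := by
  have hle : ∀ k ∈ range (i + 1), min (a i) (a k) = a k := fun k hk =>
    min_eq_right (ha (by simp at hk ⊢; omega) hi (by simpa [Nat.lt_succ_iff] using hk))
  have hge : ∀ k ∈ Ico (i + 1) n, min (a i) (a k) = a i := fun k hk =>
    min_eq_left (ha hi (by simp at hk ⊢; omega) (by simp at hk; omega))
  rw [← sum_range_add_sum_Ico _ hi, sum_congr rfl hle, sum_congr rfl hge, sum_const,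
    Nat.card_Ico, nsmul_eq_mul, Nat.cast_sub hi]
  push_cast
  ring

lemma sum_tightUtility_mul (n : ℕ) (y w : ℕ → ℝ) :
    ∑ i ∈ range n, tightUtility n y i * w i = ∑ k ∈ range n, y k * suffixMean n w k := by
  simp only [tightUtility, suffixMean, sum_mul]
  rw [sum_comm' (t' := range n) (s' := fun k => Ico k n)]
  · refine sum_congr rfl fun k _ => ?_
    simp only [div_mul_eq_mul_div, ← sum_div, ← mul_sum, mul_div_assoc]
  · intro i k
    simp only [mem_range, mem_Ico]
    omega

lemma suffixMean_nonneg {n : ℕ} {w : ℕ → ℝ} (hw : ∀ k < n, 0 ≤ w k) {k : ℕ}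
    (hk : k < n) :
    0 ≤ suffixMean n w k := by
  have : (k : ℝ) < n := by exact_mod_cast hk
  exact div_nonneg (sum_nonneg fun i hi => hw i (mem_Ico.1 hi).2) (by linarith)

lemma suffixMean_succ_le {n : ℕ} {w : ℕ → ℝ} (hw : AntitoneOn w (Set.Iio n)) {k : ℕ}
    (hk : k + 1 < n) : suffixMean n w (k + 1) ≤ suffixMean n w k := by
  have hS : ∑ i ∈ Ico (k + 1) n, w i ≤ ((n : ℝ) - (k + 1)) * w k := by
    calc ∑ i ∈ Ico (k + 1) n, w i ≤ #(Ico (k + 1) n) • w k :=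
          sum_le_card_nsmul _ _ _ fun i hi => by
            simp only [mem_Ico] at hi
            exact hw (by simp; omega) (by simpa using hi.2) (by omega)
      _ = ((n : ℝ) - (k + 1)) * w k := by
          rw [Nat.card_Ico, nsmul_eq_mul, Nat.cast_sub hk.le]
          push_cast; ring
  have h1 : (0 : ℝ) < n - (k + 1) := by
    have : ((k + 1 : ℕ) : ℝ) < n := by exact_mod_cast hk
    push_cast at this; linarith
  unfold suffixMean
  rw [sum_eq_sum_Ico_succ_bot (show k < n by omega), Nat.cast_succ,
    div_le_div_iff₀ h1 (by linarith)]
  -- after clearing denominators this is `hS`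
  nlinarith

lemma sum_mul_nonpos_of_sum_range_nonpos {n : ℕ} {z c : ℕ → ℝ}
    (hz : ∀ i < n, ∑ k ∈ range (i + 1), z k ≤ 0)
    (hc : ∀ k, k + 1 < n → c (k + 1) ≤ c k) (hc_nonneg : ∀ k < n, 0 ≤ c k) :
    ∑ k ∈ range n, c k * z k ≤ 0 := by
  obtain rfl | hn := Nat.eq_zero_or_pos n
  · simp
  have hlast : c (n - 1) * ∑ k ∈ range n, z k ≤ 0 :=
    mul_nonpos_of_nonneg_of_nonpos (hc_nonneg _ (by omega))
      (by simpa [Nat.sub_add_cancel hn] using hz (n - 1) (by omega))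
  have hsteps : 0 ≤ ∑ i ∈ range (n - 1), (c (i + 1) - c i) * ∑ k ∈ range (i + 1), z k :=
    sum_nonneg fun i hi => by
      rw [mem_range] at hi
      exact mul_nonneg_of_nonpos_of_nonpos (sub_nonpos.2 (hc i (by omega))) (hz i (by omega))
  have := sum_range_by_parts c z n
  simp only [smul_eq_mul] at this
  linarith

lemma log_le_log_add_sub_div {a b : ℝ} (ha : 0 < a) (hb : 0 < b) :
    Real.log b ≤ Real.log a + (b - a) / a := by
  have := Real.log_le_sub_one_of_pos (div_pos hb ha)
  rw [Real.log_div hb.ne' ha.ne'] at this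
  rw [sub_div, div_self ha.ne']
  linarith

theorem sum_log_tightUtility_le {n : ℕ} {a x : ℕ → ℝ} (ha_pos : ∀ k < n, 0 < a k)
    (ha_mono : MonotoneOn a (Set.Iio n))
    (hx : ∀ i < n, ∑ k ∈ range (i + 1), x k ≤ ∑ k ∈ range n, min (a i) (a k))
    (hv : ∀ i < n, 0 < tightUtility n x i) :
    ∑ i ∈ range n, Real.log (tightUtility n x i) ≤ ∑ i ∈ range n, Real.log (a i) := by
  set z := x - tightBenchmark n a
  have hz : ∀ i < n, ∑ k ∈ range (i + 1), z k ≤ 0 := fun i hi => by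
    have := hx i hi
    rw [sum_range_min_of_monotoneOn ha_mono hi, ← sum_range_tightBenchmark] at this
    simpa [z, sum_sub_distrib] using this
  have hw : AntitoneOn (fun i => (a i)⁻¹) (Set.Iio n) := fun i hi j hj hij =>
    inv_anti₀ (ha_pos i hi) (ha_mono hi hj hij)
  calc ∑ i ∈ range n, Real.log (tightUtility n x i)
      ≤ ∑ i ∈ range n, (Real.log (a i) + (tightUtility n x i - a i) / a i) :=
        sum_le_sum fun i hi =>
          log_le_log_add_sub_div (ha_pos i (mem_range.1 hi)) (hv i (mem_range.1 hi))
    _ = ∑ i ∈ range n, Real.log (a i) + ∑ i ∈ range n, tightUtility n z i * (a i)⁻¹ := by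
        rw [sum_add_distrib]
        congr 1
        refine sum_congr rfl fun i hi => ?_
        rw [tightUtility_sub, tightUtility_tightBenchmark a (mem_range.1 hi), div_eq_mul_inv]
    _ ≤ ∑ i ∈ range n, Real.log (a i) := by
        rw [sum_tightUtility_mul, add_le_iff_nonpos_right]
        simp_rw [mul_comm (z _)]
        exact sum_mul_nonpos_of_sum_range_nonpos hz (fun k hk => suffixMean_succ_le hw hk)
          (fun k hk => suffixMean_nonneg (fun i hi => (inv_pos.2 (ha_pos i hi)).le) hk)

lemma Fin.sum_filter_le_eq_sum_range {M : Type*} [AddCommMonoid M] {N : ℕ} (i : Fin N)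
    (f : ℕ → M) :
    ∑ j ∈ univ.filter (fun j => j ≤ i), f j = ∑ k ∈ range (i + 1), f k := by
  rw [filter_ge_eq_Iic, Nat.range_succ_eq_Iic, ← Fin.map_valEmbedding_Iic, sum_map]
  rfl

theorem binary_utility_lower_bound_general
    (N : ℕ)
    (u util : Fin N → ℝ)
    (hmono : ∀ i j : Fin N, i ≤ j → u i ≤ u j)
    (hu_pos : ∀ i, 0 < u i)
    (hconstraint : ∀ i : Fin N,
      (∑ j ∈ Finset.univ.filter (fun j => j ≤ i), util j) ≤ ∑ j, min (u i) (u j))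
    (hpos : ∀ i : Fin N,
      0 < ∑ j ∈ Finset.univ.filter (fun j => j ≤ i), util j / ((N : ℝ) - (j : ℕ))) :
    (∑ i, Real.log (u i)) ≥
      ∑ i : Fin N, Real.log
        (∑ j ∈ Finset.univ.filter (fun j => j ≤ i), util j / ((N : ℝ) - (j : ℕ))) := by
  obtain ⟨a, rfl⟩ : ∃ a : ℕ → ℝ, u = fun j : Fin N => a j :=
    ⟨fun k => if h : k < N then u ⟨k, h⟩ else 0, funext fun j => by simp⟩
  obtain ⟨x, rfl⟩ : ∃ x : ℕ → ℝ, util = fun j : Fin N => x j :=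
    ⟨fun k => if h : k < N then util ⟨k, h⟩ else 0, funext fun j => by simp⟩
  have hv (i : Fin N) : ∑ j ∈ univ.filter (fun j => j ≤ i), x j / ((N : ℝ) - (j : ℕ)) =
      tightUtility N x i :=
    Fin.sum_filter_le_eq_sum_range i fun k => x k / ((N : ℝ) - k)
  simp only [hv] at hpos ⊢
  rw [ge_iff_le, Fin.sum_univ_eq_sum_range (fun i => Real.log (tightUtility N x i)),
    Fin.sum_univ_eq_sum_range (fun i => Real.log (a i))]
  refine sum_log_tightUtility_le (fun k hk => hu_pos ⟨k, hk⟩)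
    (fun k hk l hl hkl => hmono ⟨k, hk⟩ ⟨l, hl⟩ hkl) (fun i hi => ?_)
    (fun i hi => hpos ⟨i, hi⟩)
  simpa only [Fin.sum_filter_le_eq_sum_range, Fin.sum_univ_eq_sum_range fun k => min (a i) (a k)]
    using hconstraint ⟨i, hi⟩

/-- Subject to the prefix constraints, the sum of logs of the algorithm's
utilities is minimized when all constraints are tight. -/
theorem binary_utility_lower_bound
    (N : ℕ) (hN : 0 < N)
    (u util : Fin N → ℝ)
    (hmono : ∀ i j : Fin N, i ≤ j → u i ≤ u j)
    (hu_pos : ∀ i, 0 < u i)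
    (hutil_nonneg : ∀ i, 0 ≤ util i)
    (hconstraint : ∀ i : Fin N,
      (∑ j ∈ Finset.univ.filter (fun j => j ≤ i), util j) ≤ ∑ j, min (u i) (u j))
    (hpos : ∀ i : Fin N,
      0 < ∑ j ∈ Finset.univ.filter (fun j => j ≤ i), util j / ((N : ℝ) - (j : ℕ))) :
    (∑ i, Real.log (u i)) ≥
      ∑ i : Fin N, Real.log
        (∑ j ∈ Finset.univ.filter (fun j => j ≤ i), util j / ((N : ℝ) - (j : ℕ))) :=
  binary_utility_lower_bound_general N u util hmono hu_pos hconstraint hpos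
end

section
/- Let μ ≥ 1 and let a_1, ..., a_N be real numbers with 1 ≤ a_i ≤ μ for each i. Then (1/N)∑_{i=1}^N log a_i − (1/N)∑_{i=1}^N log( (1/i)∑_{j=1}^i a_j ) ≤ log(log μ + 1) + 1, where log denotes the natural logarithm. -/
/-!
Sort the indices into buckets by `⌊log a_i⌋`: there are at most `⌊log μ⌋ + 1 ≤ log μ + 1`
buckets, and entries in a common bucket lie within a factor `e` of each other. If `a_i` is the
`r_i`-th entry of its bucket, the `i`-th prefix sum is at least `r_i a_i / e`, so
`∏ a_i ≤ e^N (N! / ∏ r_i) ∏ (prefix averages)`. The product `∏ r_i` is the product of the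
factorials of the bucket sizes, so `N! / ∏ r_i` is a multinomial coefficient, at most
(number of buckets)^N.
-/

open Finset Real

theorem Nat.multinomial_le_card_pow {α : Type*} [DecidableEq α] (s : Finset α) (f : α → ℕ) :
    Nat.multinomial s f ≤ #s ^ ∑ i ∈ s, f i := by
  set g : α → ℕ := fun i => if i ∈ s then f i else 0
  have hfg : Nat.multinomial s f = Nat.multinomial s g :=
    Nat.multinomial_congr fun i hi => by simp [g, hi]
  have hsum : ∑ i ∈ s, f i = ∑ i ∈ s, g i := sum_congr rfl fun i hi => by simp [g, hi]
  have hg : g ∈ piAntidiag s (∑ i ∈ s, f i) := by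
    rw [mem_piAntidiag, hsum]
    exact ⟨rfl, fun i hi => by contrapose! hi; simp [g, hi]⟩
  calc Nat.multinomial s f
      ≤ ∑ k ∈ piAntidiag s (∑ i ∈ s, f i), Nat.multinomial s k :=
        hfg ▸ single_le_sum (fun _ _ => Nat.zero_le _) hg
    _ = #s ^ ∑ i ∈ s, f i := by
        simpa using (sum_pow_eq_sum_piAntidiag s (fun _ => (1 : ℕ)) (∑ i ∈ s, f i)).symm

theorem Finset.prod_card_filter_le_eq_factorial {α : Type*} [LinearOrder α] (s : Finset α) :
    ∏ i ∈ s, #{j ∈ s | j ≤ i} = (#s).factorial := by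
  induction s using Finset.induction_on_max with
  | empty => simp
  | insert a s ha ih =>
    have has : a ∉ s := fun h => lt_irrefl a (ha a h)
    have htop : #{j ∈ insert a s | j ≤ a} = #s + 1 := by
      rw [filter_true_of_mem fun j hj => ?_, card_insert_of_notMem has]
      rcases mem_insert.mp hj with rfl | hj
      exacts [le_rfl, (ha j hj).le]
    have hrest : ∀ i ∈ s, #{j ∈ insert a s | j ≤ i} = #{j ∈ s | j ≤ i} := fun i hi => by
      rw [filter_insert, if_neg (ha i hi).not_ge]
    rw [prod_insert has, htop, prod_congr rfl hrest, ih, card_insert_of_notMem has,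
      Nat.factorial_succ]

theorem factorial_card_le_card_pow_mul_prod_card_filter {ι β : Type*} [Fintype ι] [LinearOrder ι]
    [DecidableEq β] (κ : ι → β) (t : Finset β) (hκ : ∀ i, κ i ∈ t) :
    (Fintype.card ι).factorial ≤ #t ^ Fintype.card ι * ∏ i, #{j | j ≤ i ∧ κ j = κ i} := by
  have hκ' : ∀ i ∈ (univ : Finset ι), κ i ∈ t := fun i _ => hκ i
  have hcard : Fintype.card ι = ∑ k ∈ t, #{i | κ i = k} := by
    rw [← card_univ, card_eq_sum_card_fiberwise hκ']
  have hprod : ∏ i, #{j | j ≤ i ∧ κ j = κ i} = ∏ k ∈ t, (#{i | κ i = k}).factorial := by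
    rw [← prod_fiberwise_of_maps_to hκ']
    refine prod_congr rfl fun k _ => ?_
    rw [← prod_card_filter_le_eq_factorial]
    refine prod_congr rfl fun i hi => congr_arg card ?_
    ext j
    simp [(mem_filter.mp hi).2, and_comm]
  rw [hprod, hcard, ← Nat.multinomial_spec, mul_comm]
  exact Nat.mul_le_mul_right _ (Nat.multinomial_le_card_pow t _)

theorem Real.le_exp_one_mul_of_floor_log_eq {x y : ℝ} (hx : 0 < x) (hy : 1 ≤ y)
    (h : ⌊log x⌋₊ = ⌊log y⌋₊) : x ≤ exp 1 * y := by
  have hlog : log x ≤ 1 + log y := calc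
    log x ≤ ⌊log x⌋₊ + 1 := (Nat.lt_floor_add_one _).le
    _ = ⌊log y⌋₊ + 1 := by rw [h]
    _ ≤ 1 + log y := by linarith [Nat.floor_le (log_nonneg hy)]
  calc x = exp (log x) := (exp_log hx).symm
    _ ≤ exp (1 + log y) := exp_le_exp.mpr hlog
    _ = exp 1 * y := by rw [exp_add, exp_log (by linarith)]

theorem card_floor_log_eq_mul_le_exp_one_mul_sum {ι : Type*} [Fintype ι] [LinearOrder ι]
    (a : ι → ℝ) (ha : ∀ i, 1 ≤ a i) (i : ι) :
    #{j | j ≤ i ∧ ⌊log (a j)⌋₊ = ⌊log (a i)⌋₊} * a i ≤ exp 1 * ∑ j ∈ {j | j ≤ i}, a j := by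
  calc #{j | j ≤ i ∧ ⌊log (a j)⌋₊ = ⌊log (a i)⌋₊} * a i
      = exp 1 * (#{j | j ≤ i ∧ ⌊log (a j)⌋₊ = ⌊log (a i)⌋₊} • (a i / exp 1)) := by
        rw [nsmul_eq_mul]; field_simp
    _ ≤ exp 1 * ∑ j ∈ {j | j ≤ i ∧ ⌊log (a j)⌋₊ = ⌊log (a i)⌋₊}, a j := by
        gcongr
        refine card_nsmul_le_sum _ _ _ fun j hj => ?_
        rw [div_le_iff₀' (exp_pos 1)]
        exact le_exp_one_mul_of_floor_log_eq (by linarith [ha i]) (ha j) (mem_filter.mp hj).2.2.symm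
    _ ≤ exp 1 * ∑ j ∈ {j | j ≤ i}, a j := by
        gcongr
        · exact fun j _ _ => by linarith [ha j]
        · exact fun h => h.1

noncomputable def prefixAverage {N : ℕ} (a : Fin N → ℝ) (i : Fin N) : ℝ :=
  (1 / ((i : ℕ) + 1 : ℝ)) * ∑ j ∈ {j | j ≤ i}, a j

theorem prefixAverage_pos {N : ℕ} (a : Fin N → ℝ) (ha : ∀ i, 0 < a i) (i : Fin N) :
    0 < prefixAverage a i :=
  mul_pos (by positivity) (sum_pos (fun j _ => ha j) ⟨i, by simp⟩)

theorem prod_card_floor_log_eq_mul_prod_le {N : ℕ} (a : Fin N → ℝ) (ha : ∀ i, 1 ≤ a i) :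
    (∏ i, (#{j | j ≤ i ∧ ⌊log (a j)⌋₊ = ⌊log (a i)⌋₊} : ℝ)) * ∏ i, a i ≤
      exp 1 ^ N * N.factorial * ∏ i, prefixAverage a i := by
  have hsum : ∀ i : Fin N, ∑ j ∈ {j | j ≤ i}, a j = ((i : ℕ) + 1 : ℝ) * prefixAverage a i :=
    fun i => by rw [prefixAverage]; field_simp
  have hfac : ∏ i : Fin N, ((i : ℕ) + 1 : ℝ) = N.factorial := by
    rw [Fin.prod_univ_eq_prod_range (fun i => (i : ℝ) + 1) N]
    exact_mod_cast prod_range_add_one_eq_factorial N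
  calc (∏ i, (#{j | j ≤ i ∧ ⌊log (a j)⌋₊ = ⌊log (a i)⌋₊} : ℝ)) * ∏ i, a i
      = ∏ i, #{j | j ≤ i ∧ ⌊log (a j)⌋₊ = ⌊log (a i)⌋₊} * a i := prod_mul_distrib.symm
    _ ≤ ∏ i, exp 1 * ∑ j ∈ {j | j ≤ i}, a j :=
        prod_le_prod (fun i _ => mul_nonneg (Nat.cast_nonneg _) (by linarith [ha i]))
          fun i _ => card_floor_log_eq_mul_le_exp_one_mul_sum a ha i
    _ = exp 1 ^ N * N.factorial * ∏ i, prefixAverage a i := by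
        rw [prod_mul_distrib, prod_const, card_univ, Fintype.card_fin,
          prod_congr rfl fun i _ => hsum i, prod_mul_distrib, hfac, mul_assoc]

theorem prod_le_pow_mul_prod_prefixAverage {N : ℕ} {μ : ℝ} (a : Fin N → ℝ)
    (ha : ∀ i, 1 ≤ a i ∧ a i ≤ μ) :
    ∏ i, a i ≤ (exp 1 * (⌊log μ⌋₊ + 1)) ^ N * ∏ i, prefixAverage a i := by
  have hbucket : ∀ i, ⌊log (a i)⌋₊ ∈ range (⌊log μ⌋₊ + 1) := fun i =>
    mem_range_succ_iff.mpr (Nat.floor_mono (log_le_log (by linarith [ha i]) (ha i).2))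
  have hfact : (N.factorial : ℝ) ≤
      (⌊log μ⌋₊ + 1) ^ N * ∏ i, (#{j | j ≤ i ∧ ⌊log (a j)⌋₊ = ⌊log (a i)⌋₊} : ℝ) := by
    have := factorial_card_le_card_pow_mul_prod_card_filter _ _ hbucket
    rw [Fintype.card_fin, card_range] at this
    exact_mod_cast this
  set R : ℝ := ∏ i, (#{j | j ≤ i ∧ ⌊log (a j)⌋₊ = ⌊log (a i)⌋₊} : ℝ)
  have hR : 0 < R := prod_pos fun i _ => Nat.cast_pos.mpr (card_pos.mpr ⟨i, by simp⟩)
  have havg : 0 ≤ ∏ i, prefixAverage a i :=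
    prod_nonneg fun i _ => (prefixAverage_pos a (fun j => by linarith [(ha j).1]) i).le
  refine le_of_mul_le_mul_left ?_ hR
  calc R * ∏ i, a i
      ≤ exp 1 ^ N * N.factorial * ∏ i, prefixAverage a i :=
        prod_card_floor_log_eq_mul_prod_le a fun i => (ha i).1
    _ ≤ exp 1 ^ N * ((⌊log μ⌋₊ + 1) ^ N * R) * ∏ i, prefixAverage a i := by gcongr
    _ = R * ((exp 1 * (⌊log μ⌋₊ + 1)) ^ N * ∏ i, prefixAverage a i) := by
        rw [mul_pow]; ring

theorem prefix_average_log_inequality_general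
    (N : ℕ) (μ : ℝ) (hμ : 1 ≤ μ)
    (a : Fin N → ℝ)
    (ha : ∀ i, 1 ≤ a i ∧ a i ≤ μ) :
    (1 / N) * (∑ i, Real.log (a i)) -
      (1 / N) * (∑ i : Fin N, Real.log
        ((1 / ((i : ℕ) + 1 : ℝ)) * ∑ j ∈ Finset.univ.filter (fun j => j ≤ i), a j)) ≤
      Real.log (Real.log μ + 1) + 1 := by
  change _ - 1 / (N : ℝ) * ∑ i, log (prefixAverage a i) ≤ _
  have ha₀ : ∀ i, 0 < a i := fun i => by linarith [(ha i).1]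
  have hlogμ : 0 ≤ log μ := log_nonneg hμ
  have hbound : 0 ≤ log (log μ + 1) + 1 := by linarith [log_nonneg (by linarith : 1 ≤ log μ + 1)]
  have hP : 0 < ∏ i, prefixAverage a i := prod_pos fun i _ => prefixAverage_pos a ha₀ i
  rw [← mul_sub, one_div_mul_eq_div]
  refine div_le_of_le_mul₀ N.cast_nonneg hbound ?_
  rw [← log_prod fun i _ => (ha₀ i).ne', ← log_prod fun i _ => (prefixAverage_pos a ha₀ i).ne']
  calc log (∏ i, a i) - log (∏ i, prefixAverage a i)
      ≤ log ((exp 1 * (⌊log μ⌋₊ + 1)) ^ N * ∏ i, prefixAverage a i) -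
          log (∏ i, prefixAverage a i) := by
        gcongr
        · exact prod_pos fun i _ => ha₀ i
        · exact prod_le_pow_mul_prod_prefixAverage a ha
    _ = N * (1 + log (⌊log μ⌋₊ + 1)) := by
        rw [log_mul (by positivity) hP.ne', log_pow, log_mul (exp_pos 1).ne' (by positivity),
          log_exp]
        ring
    _ ≤ (log (log μ + 1) + 1) * N := by
        rw [mul_comm, add_comm]
        gcongr
        exact Nat.floor_le hlogμ

/-- Hardy-type inequality: the average log of a sequence in [1, μ] exceeds the
average log of its prefix averages by at most log(log μ + 1) + 1. -/
theorem prefix_average_log_inequality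
    (N : ℕ) (hN : 0 < N) (μ : ℝ) (hμ : 1 ≤ μ)
    (a : Fin N → ℝ)
    (ha : ∀ i, 1 ≤ a i ∧ a i ≤ μ) :
    (1 / N) * (∑ i, Real.log (a i)) -
      (1 / N) * (∑ i : Fin N, Real.log
        ((1 / ((i : ℕ) + 1 : ℝ)) * ∑ j ∈ Finset.univ.filter (fun j => j ≤ i), a j)) ≤
      Real.log (Real.log μ + 1) + 1 :=
  prefix_average_log_inequality_general N μ hμ a ha
end

section
/- For real numbers a_1 ≤ a_2 ≤ ... ≤ a_N and any permutation σ of {1,...,N}, ∑_{i=1}^N log( (1/i) ∑_{j=1}^i a_{σ(j)} ) ≥ ∑_{i=1}^N log( (1/i) ∑_{j=1}^i a_j ), assuming all a_i > 0. -/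
open Finset

lemma strictMono_coe_le {k N : ℕ} (f : Fin k → Fin N)
    (hf : StrictMono fun i => ((f i : Fin N) : ℕ)) : ∀ i : Fin k, (i : ℕ) ≤ (f i : ℕ) := by
  intro i
  obtain ⟨m, hm⟩ := i
  induction m with
  | zero => exact Nat.zero_le _
  | succ n ih =>
    have h1 : (f ⟨n, Nat.lt_of_succ_lt hm⟩ : ℕ) < (f ⟨n + 1, hm⟩ : ℕ) := by
      exact hf (by simp [Fin.lt_def])
    exact Nat.succ_le_of_lt (lt_of_le_of_lt (ih (Nat.lt_of_succ_lt hm)) h1)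

lemma prefix_min {N : ℕ} (a : Fin N → ℝ) (hmono : ∀ i j : Fin N, i ≤ j → a i ≤ a j)
    (T : Finset (Fin N)) :
    ∑ j ∈ Finset.univ.filter (fun j : Fin N => (j : ℕ) < T.card), a j ≤ ∑ t ∈ T, a t := by
  classical
  set k := T.card with hk
  have hkN : k ≤ N := by
    have := T.card_le_univ
    simpa [hk] using this
  let f : Fin k → Fin N := T.orderEmbOfFin hk.symm
  have hfm : StrictMono fun i => ((f i : Fin N) : ℕ) := by
    intro i j hij
    have := (T.orderEmbOfFin hk.symm).strictMono hij
    exact this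
  have hle : ∀ i : Fin k, (i : ℕ) ≤ (f i : ℕ) := strictMono_coe_le f hfm
  have hsum : ∑ t ∈ T, a t = ∑ i : Fin k, a (f i) := by
    rw [← Finset.sum_attach T a]
    exact (Fintype.sum_equiv (T.orderIsoOfFin hk.symm).toEquiv
      (fun i => a (f i)) (fun x => a x.1)
      (fun i => by simp [f, ← Finset.coe_orderIsoOfFin_apply])).symm
  have hbij : ∑ j ∈ Finset.univ.filter (fun j : Fin N => (j : ℕ) < k), a j
      = ∑ i : Fin k, a ⟨i, lt_of_lt_of_le i.2 hkN⟩ := by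
    refine Finset.sum_bij'
      (fun (j : Fin N) (hj : j ∈ Finset.univ.filter (fun j : Fin N => (j : ℕ) < k)) =>
        (⟨(j : ℕ), by simpa using (Finset.mem_filter.mp hj).2⟩ : Fin k))
      (fun i _ => (⟨(i : ℕ), lt_of_lt_of_le i.2 hkN⟩ : Fin N)) ?_ ?_ ?_ ?_ ?_
    · intro j hj; simp
    · intro i _; simp [Finset.mem_filter]
    · intro j hj; ext; simp
    · intro i _; ext; simp
    · intro j hj; rfl
  rw [hsum, hbij]
  apply Finset.sum_le_sum
  intro i _
  exact hmono _ _ (by simpa [Fin.le_def] using hle i)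

/-- The increasing arrangement minimizes the sum of logs of prefix averages. -/
theorem sorted_minimizes_prefix_average_logs
    (N : ℕ) (a : Fin N → ℝ)
    (hpos : ∀ i, 0 < a i)
    (hmono : ∀ i j : Fin N, i ≤ j → a i ≤ a j)
    (σ : Equiv.Perm (Fin N)) :
    (∑ i : Fin N, Real.log
        ((1 / ((i : ℕ) + 1 : ℝ)) * ∑ j ∈ Finset.univ.filter (fun j => j ≤ i), a (σ j))) ≥
      ∑ i : Fin N, Real.log
        ((1 / ((i : ℕ) + 1 : ℝ)) * ∑ j ∈ Finset.univ.filter (fun j => j ≤ i), a j) := by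
  classical
  apply Finset.sum_le_sum
  intro i _
  set S : Finset (Fin N) := Finset.univ.filter (fun j => j ≤ i) with hS
  have hScard : S.card = (i : ℕ) + 1 := by
    have : S = Finset.Iic i := by
      ext j; simp [hS]
    rw [this]
    simp [Nat.card_Iic]
  have hperm : ∑ j ∈ S, a (σ j) = ∑ t ∈ S.image σ, a t := by
    rw [Finset.sum_image (fun x _ y _ h => σ.injective h)]
  have hcard : (S.image σ).card = (i : ℕ) + 1 := by
    rw [Finset.card_image_of_injective _ σ.injective, hScard]
  have hfilt : Finset.univ.filter (fun j : Fin N => (j : ℕ) < (S.image σ).card) = S := by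
    ext j
    rw [Finset.mem_filter, hcard]
    simp only [hS, Finset.mem_filter, Finset.mem_univ, true_and, Fin.le_def]
    exact Nat.lt_succ_iff
  have key : ∑ j ∈ S, a j ≤ ∑ j ∈ S, a (σ j) := by
    rw [hperm]
    have := prefix_min a hmono (S.image σ)
    rwa [hfilt] at this
  have hSpos : 0 < ∑ j ∈ S, a j := by
    apply Finset.sum_pos (fun j _ => hpos j)
    exact ⟨i, by simp [hS]⟩
  have hc : (0 : ℝ) < 1 / ((i : ℕ) + 1 : ℝ) := by positivity
  apply Real.log_le_log (by positivity)
  exact mul_le_mul_of_nonneg_left key hc.le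
end
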